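/- arXiv:2509.03513 — 3 statements merged into one kernel-verified Lean document; each statement's English description precedes it below -/
import Mathlib

section
/- For every U in SU(N) there exists an N×N complex matrix X that is Hermitian and traceless such that U = exp(iX) and ‖X‖²_{H-S} = Tr(X†X) ≤ N(N−1)π². In particular, the exponential map from Hermitian traceless matrices of Hilbert–Schmidt norm at most √(N(N−1))·π onto SU(N) is surjective. -/
open Matrix NormedSpace
open scoped ComplexOrder

/-!
Through the continuous functional calculus, `H = arg U` is a Hermitian matrix with
`exp (i H) = U` whose eigenvalues `φᵢ` lie in `[-π, π]`; diagonalising `H` writes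
`U = W diag(e^{i φᵢ}) W*` with `W` unitary, and `det U = 1` forces `∑ φᵢ = 2πk`.
Repeatedly lowering the largest phase by `2π` (or raising the smallest, if `k < 0`)
keeps every pairwise gap at most `2π` and reaches phases `θᵢ` with `∑ θᵢ = 0`.
Then `X = W diag(θᵢ) W*` works: since `∑ θᵢ = 0`,
`2N ∑ θᵢ² = ∑ᵢ ∑ⱼ (θᵢ - θⱼ)² ≤ N (N - 1) (2π)²`.
-/

open Real Unitary
open Complex (I arg ofReal)

section Phases

variable {ι : Type*}

theorem abs_sub_le_sub_single_of_forall_le [DecidableEq ι] {φ : ι → ℝ} {c : ℝ} {j : ι}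
    (hc : ∀ i l, |φ i - φ l| ≤ c) (hj : ∀ i, φ i ≤ φ j) (i l : ι) :
    |(φ - Pi.single j c : ι → ℝ) i - (φ - Pi.single j c : ι → ℝ) l| ≤ c := by
  have hil := abs_le.mp (hc i l)
  have hij := abs_le.mp (hc i j)
  have hlj := abs_le.mp (hc l j)
  have hi := hj i
  have hl := hj l
  simp only [Pi.sub_apply, Pi.single_apply]
  split_ifs <;> subst_vars <;> rw [abs_le] <;> constructor <;> linarith

variable [Fintype ι]

theorem exists_int_sum_eq_two_pi_mul_of_prod_exp_eq_one {φ : ι → ℝ}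
    (h : ∏ i, Complex.exp (φ i * I) = 1) : ∃ k : ℤ, ∑ i, φ i = 2 * π * k := by
  rw [← Complex.exp_sum, ← Finset.sum_mul, Complex.exp_eq_one_iff] at h
  obtain ⟨k, hk⟩ := h
  exact ⟨k, by simpa [mul_comm] using congrArg Complex.im hk⟩

theorem exists_sum_eq_zero_of_sum_eq_two_pi_mul_nat (k : ℕ) {φ : ι → ℝ}
    (hφ : ∀ i j, |φ i - φ j| ≤ 2 * π) (hsum : ∑ i, φ i = 2 * π * k) :
    ∃ θ : ι → ℝ, (∀ i, Complex.exp (θ i * I) = Complex.exp (φ i * I)) ∧ ∑ i, θ i = 0 ∧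
      ∀ i j, |θ i - θ j| ≤ 2 * π := by
  classical
  induction k generalizing φ with
  | zero => exact ⟨φ, fun _ => rfl, by simpa using hsum, hφ⟩
  | succ k ih =>
    rcases isEmpty_or_nonempty ι with hι | hι
    · have hpos : (0 : ℝ) < 2 * π * ↑(k + 1) := by positivity
      simp only [Finset.univ_eq_empty, Finset.sum_empty] at hsum
      linarith
    obtain ⟨j, hj⟩ := Finite.exists_max φ
    obtain ⟨θ, hexp, h0, hθ⟩ := ih (abs_sub_le_sub_single_of_forall_le hφ hj)
      (by
        simp only [Pi.sub_apply, Finset.sum_sub_distrib, hsum, Finset.sum_pi_single',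
          Finset.mem_univ, if_true]
        push_cast
        ring)
    refine ⟨θ, fun i => (hexp i).trans ?_, h0, hθ⟩
    simp only [Pi.sub_apply, Pi.single_apply]
    split_ifs <;> simp [sub_mul, Complex.exp_sub]

theorem exists_sum_eq_zero_of_sum_eq_two_pi_mul (k : ℤ) {φ : ι → ℝ}
    (hφ : ∀ i j, |φ i - φ j| ≤ 2 * π) (hsum : ∑ i, φ i = 2 * π * k) :
    ∃ θ : ι → ℝ, (∀ i, Complex.exp (θ i * I) = Complex.exp (φ i * I)) ∧ ∑ i, θ i = 0 ∧
      ∀ i j, |θ i - θ j| ≤ 2 * π := by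
  obtain ⟨k, rfl | rfl⟩ := k.eq_nat_or_neg
  · exact exists_sum_eq_zero_of_sum_eq_two_pi_mul_nat k hφ (mod_cast hsum)
  obtain ⟨θ, hexp, h0, hθ⟩ := exists_sum_eq_zero_of_sum_eq_two_pi_mul_nat k (φ := -φ)
    (fun i j => by simpa [neg_add_eq_sub] using hφ j i) (by simp [hsum])
  refine ⟨-θ, fun i => ?_, by simp [h0], fun i j => by simpa [neg_add_eq_sub] using hθ j i⟩
  simpa [neg_mul, Complex.exp_neg] using congrArg Inv.inv (hexp i)

theorem sum_sq_le_of_sum_eq_zero {θ : ι → ℝ} {c : ℝ} (h0 : ∑ i, θ i = 0)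
    (hc : ∀ i j, |θ i - θ j| ≤ c) :
    2 * Fintype.card ι * ∑ i, θ i ^ 2 ≤ Fintype.card ι * (Fintype.card ι - 1) * c ^ 2 := by
  classical
  have hrow (i : ι) : ∑ j, (θ i - θ j) ^ 2 = Fintype.card ι * θ i ^ 2 + ∑ j, θ j ^ 2 := by
    simp only [sub_sq, Finset.sum_add_distrib, Finset.sum_sub_distrib, ← Finset.mul_sum, h0]
    simp
  have hrow_le (i : ι) : ∑ j, (θ i - θ j) ^ 2 ≤ (Fintype.card ι - 1) * c ^ 2 := by
    have : Nonempty ι := ⟨i⟩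
    rw [← Finset.add_sum_erase _ _ (Finset.mem_univ i), sub_self, sq, zero_mul, zero_add]
    calc ∑ j ∈ Finset.univ.erase i, (θ i - θ j) ^ 2 ≤ ∑ j ∈ Finset.univ.erase i, c ^ 2 :=
          Finset.sum_le_sum fun j _ => sq_le_sq' (abs_le.mp (hc i j)).1 (abs_le.mp (hc i j)).2
      _ = (Fintype.card ι - 1) * c ^ 2 := by
          rw [Finset.sum_const, Finset.card_erase_of_mem (Finset.mem_univ i), Finset.card_univ,
            nsmul_eq_mul, Nat.cast_pred Fintype.card_pos]
  calc 2 * Fintype.card ι * ∑ i, θ i ^ 2 = ∑ i, ∑ j, (θ i - θ j) ^ 2 := by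
        simp only [hrow, Finset.sum_add_distrib, ← Finset.mul_sum, Finset.sum_const,
          Finset.card_univ, nsmul_eq_mul]
        ring
    _ ≤ ∑ _i : ι, (Fintype.card ι - 1) * c ^ 2 := Finset.sum_le_sum fun i _ => hrow_le i
    _ = Fintype.card ι * (Fintype.card ι - 1) * c ^ 2 := by simp [mul_assoc]

theorem sum_sq_le_card_mul_card_sub_one_mul_pi_sq {θ : ι → ℝ} (h0 : ∑ i, θ i = 0)
    (hθ : ∀ i j, |θ i - θ j| ≤ 2 * π) :
    ∑ i, θ i ^ 2 ≤ Fintype.card ι * (Fintype.card ι - 1) * π ^ 2 := by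
  rcases isEmpty_or_nonempty ι with hι | hι
  · simp
  have hpos : (0 : ℝ) < Fintype.card ι := mod_cast Fintype.card_pos
  have hN : 0 ≤ ((Fintype.card ι : ℝ) - 1) * (Fintype.card ι - 2) := by
    obtain h | h : Fintype.card ι = 1 ∨ 2 ≤ Fintype.card ι := by
      have := Fintype.card_pos (α := ι); omega
    · simp [h]
    · have : (2 : ℝ) ≤ Fintype.card ι := mod_cast h
      nlinarith
  have h2 : ∑ i, θ i ^ 2 ≤ 2 * (Fintype.card ι - 1) * π ^ 2 := by
    refine le_of_mul_le_mul_left ?_ hpos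
    linarith [sum_sq_le_of_sum_eq_zero h0 hθ]
  nlinarith [mul_nonneg hN (sq_nonneg π)]

end Phases

namespace Matrix

variable {n : Type*} [Fintype n] [DecidableEq n]

theorem trace_conjStarAlgAut {𝕜 : Type*} [RCLike 𝕜] (W : unitary (Matrix n n 𝕜))
    (A : Matrix n n 𝕜) : (conjStarAlgAut 𝕜 _ W A).trace = A.trace := by
  rw [conjStarAlgAut_apply, trace_mul_cycle, coe_star_mul_self, one_mul]

theorem det_conjStarAlgAut {𝕜 : Type*} [RCLike 𝕜] (W : unitary (Matrix n n 𝕜))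
    (A : Matrix n n 𝕜) : (conjStarAlgAut 𝕜 _ W A).det = A.det := by
  rw [conjStarAlgAut_apply, det_mul, det_mul, mul_right_comm, ← det_mul,
    mul_star_self_of_mem W.2, det_one, one_mul]

theorem exp_conjStarAlgAut {𝕜 : Type*} [RCLike 𝕜] (W : unitary (Matrix n n 𝕜))
    (A : Matrix n n 𝕜) : exp (conjStarAlgAut 𝕜 _ W A) = conjStarAlgAut 𝕜 _ W (exp A) := by
  simpa using exp_units_conj (toUnits W) A

theorem exp_I_smul_conjStarAlgAut_diagonal (W : unitary (Matrix n n ℂ)) (θ : n → ℝ) :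
    exp (I • conjStarAlgAut ℂ _ W (diagonal (ofReal ∘ θ))) =
      conjStarAlgAut ℂ _ W (diagonal fun i => Complex.exp (θ i * I)) := by
  rw [← map_smul, exp_conjStarAlgAut, ← diagonal_smul, exp_diagonal]
  congr 2
  ext i
  simp [← Complex.exp_eq_exp_ℂ, mul_comm]

section CStarAlgebra

open scoped Matrix.Norms.L2Operator

-- The spectrum of a matrix is finite, so `arg` is continuous on it despite its branch cut.
theorem exp_I_smul_cfc_arg {U : Matrix n n ℂ} (hU : U ∈ unitary (Matrix n n ℂ)) :
    exp (I • cfc (ofReal ∘ arg) U) = U := by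
  have hcont (f : ℂ → ℂ) : ContinuousOn f (spectrum ℂ U) := U.finite_spectrum.continuousOn f
  rw [← CFC.exp_eq_normedSpace_exp (𝕜 := ℂ), ← cfc_smul _ _ U (hcont _),
    ← cfc_comp' _ _ U (by fun_prop) (hcont _)]
  conv_rhs => rw [← cfc_id' ℂ U]
  refine cfc_congr fun z hz ↦ ?_
  have := Complex.norm_mul_exp_arg_mul_I z
  rw [spectrum.norm_eq_one_of_unitary hU hz] at this
  simpa [mul_comm, ← Complex.exp_eq_exp_ℂ] using this

theorem abs_eigenvalues_cfc_arg_le_pi {U : Matrix n n ℂ} (hU : U ∈ unitary (Matrix n n ℂ))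
    (hH : (cfc (ofReal ∘ arg) U).IsHermitian) (i : n) : |hH.eigenvalues i| ≤ π := by
  have := (spectrum.algebraMap_mem_iff ℂ).mpr (hH.eigenvalues_mem_spectrum_real i)
  rw [cfc_map_spectrum _ U (isStarNormal_of_mem_unitary hU) (U.finite_spectrum.continuousOn _)]
    at this
  obtain ⟨z, -, hz⟩ := this
  rw [Complex.coe_algebraMap, Function.comp_apply, Complex.ofReal_inj] at hz
  exact hz ▸ Complex.abs_arg_le_pi z

theorem exists_conjStarAlgAut_diagonal_exp_of_mem_unitary {U : Matrix n n ℂ}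
    (hU : U ∈ unitary (Matrix n n ℂ)) :
    ∃ (W : unitary (Matrix n n ℂ)) (φ : n → ℝ), (∀ i, |φ i| ≤ π) ∧
      U = conjStarAlgAut ℂ _ W (diagonal fun i => Complex.exp (φ i * I)) := by
  have hH : (cfc (ofReal ∘ arg) U).IsHermitian := IsSelfAdjoint.cfc_arg U
  refine ⟨hH.eigenvectorUnitary, hH.eigenvalues, abs_eigenvalues_cfc_arg_le_pi hU hH, ?_⟩
  calc U = exp (I • cfc (ofReal ∘ arg) U) := (exp_I_smul_cfc_arg hU).symm
    _ = _ := (congrArg (fun H => exp (I • H)) hH.spectral_theorem).trans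
      (exp_I_smul_conjStarAlgAut_diagonal _ _)

end CStarAlgebra

end Matrix

/-- Every `U ∈ SU(N)` is of the form `exp (i X)` for a Hermitian traceless matrix `X` whose
squared Hilbert–Schmidt norm `Tr (X† X)` is at most `N (N - 1) π²`.  In particular the
exponential map, restricted to Hermitian traceless matrices of Hilbert–Schmidt norm at most
`√(N (N - 1)) π`, is onto `SU(N)`. -/
theorem exp_map_onto_SU (N : ℕ) (U : Matrix (Fin N) (Fin N) ℂ)
    (hU : U ∈ Matrix.specialUnitaryGroup (Fin N) ℂ) :
    ∃ X : Matrix (Fin N) (Fin N) ℂ, X.IsHermitian ∧ X.trace = 0 ∧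
      U = exp (Complex.I • X) ∧
      (Xᴴ * X).trace ≤ ((N * (N - 1) * Real.pi ^ 2 : ℝ) : ℂ) := by
  obtain ⟨hUu, hdet⟩ := mem_specialUnitaryGroup_iff.mp hU
  obtain ⟨W, φ, hφ, rfl⟩ := exists_conjStarAlgAut_diagonal_exp_of_mem_unitary hUu
  obtain ⟨k, hk⟩ := exists_int_sum_eq_two_pi_mul_of_prod_exp_eq_one
    (by rwa [det_conjStarAlgAut, det_diagonal] at hdet)
  have hφ' (i j : Fin N) : |φ i - φ j| ≤ 2 * π := by linarith [abs_sub (φ i) (φ j), hφ i, hφ j]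
  obtain ⟨θ, hθφ, hθ0, hθ⟩ := exists_sum_eq_zero_of_sum_eq_two_pi_mul k hφ' hk
  have hD : IsSelfAdjoint (diagonal (ofReal ∘ θ)) :=
    isHermitian_diagonal_of_self_adjoint _ (by ext; simp)
  refine ⟨conjStarAlgAut ℂ _ W (diagonal (ofReal ∘ θ)), hD.map _, ?_, ?_, ?_⟩
  · simp only [trace_conjStarAlgAut, trace_diagonal, Function.comp_apply, ← Complex.ofReal_sum,
      hθ0, Complex.ofReal_zero]
  · simp_rw [exp_I_smul_conjStarAlgAut_diagonal, hθφ]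
  · rw [← star_eq_conjTranspose, ← map_star, ← map_mul, trace_conjStarAlgAut, hD.star_eq,
      diagonal_mul_diagonal, trace_diagonal]
    have := sum_sq_le_card_mul_card_sub_one_mul_pi_sq hθ0 hθ
    rw [Fintype.card_fin] at this
    convert Complex.real_le_real.mpr this using 1
    push_cast
    simp [sq]
end

section
/- Let X₁, X₂, X₃, X₄ be N×N complex matrices that are Hermitian and traceless, and set U_p = exp(iX₁)·exp(iX₂)·(exp(iX₄)·exp(iX₃))†. Then the single-plaquette Wilson action satisfies the quadratic upper bound ‖U_p − 1‖²_{H-S} = |2 Re Tr(U_p − 1)| ≤ 4N · ∑_{j=1}^{4} Tr(X_j† X_j). -/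
/-!
Each factor `exp (i X)` is unitary, hence so is `U_p`, and for a unitary `U` expanding
`(U - 1)ᴴ (U - 1)` gives `‖U - 1‖² = -2 Re Tr (U - 1)`; this is the first claim.
The Hilbert–Schmidt norm is invariant under multiplication by unitaries, so
`U V - 1 = (U - 1) V + (V - 1)` gives `‖U V - 1‖ ≤ ‖U - 1‖ + ‖V - 1‖`, and `‖U_p - 1‖` is at most
`∑ ‖exp (i X_j) - 1‖`. Diagonalising `X_j` by a unitary and using `|e^{iλ} - 1| ≤ |λ|` bounds each
term by `‖X_j‖`; Cauchy–Schwarz then gives the constant `4`, and `4 ≤ 4N` once `N ≥ 1`.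
-/

open Matrix NormedSpace

theorem add_add_add_sq_le (a b c d : ℝ) :
    (a + b + c + d) ^ 2 ≤ 4 * (a ^ 2 + b ^ 2 + c ^ 2 + d ^ 2) := by
  nlinarith [sq_nonneg (a - b), sq_nonneg (a - c), sq_nonneg (a - d), sq_nonneg (b - c),
    sq_nonneg (b - d), sq_nonneg (c - d)]

namespace Matrix

open scoped Matrix.Norms.Frobenius

variable {𝕜 m n : Type*} [RCLike 𝕜] [Fintype m] [Fintype n]

theorem frobenius_norm_sq_eq_re_trace (A : Matrix m n 𝕜) :
    ‖A‖ ^ 2 = RCLike.re (Aᴴ * A).trace := by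
  rw [frobenius_norm_def, ← Real.rpow_natCast, ← Real.rpow_mul (by positivity), Finset.sum_comm]
  simp only [trace, diag, mul_apply, conjTranspose_apply, map_sum, RCLike.star_def,
    RCLike.conj_mul]
  norm_num

variable [DecidableEq n]

theorem frobenius_norm_mul_unitary (A : Matrix m n 𝕜) {U : Matrix n n 𝕜}
    (hU : U ∈ unitaryGroup n 𝕜) : ‖A * U‖ = ‖A‖ := by
  have hUU : U * Uᴴ = 1 := (mem_unitaryGroup_iff).1 hU
  refine (sq_eq_sq₀ (norm_nonneg _) (norm_nonneg _)).1 ?_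
  rw [frobenius_norm_sq_eq_re_trace, frobenius_norm_sq_eq_re_trace, conjTranspose_mul,
    Matrix.mul_assoc, trace_mul_comm, Matrix.mul_assoc, Matrix.mul_assoc, hUU, Matrix.mul_one]

theorem frobenius_norm_unitary_mul (A : Matrix n m 𝕜) {U : Matrix n n 𝕜}
    (hU : U ∈ unitaryGroup n 𝕜) : ‖U * A‖ = ‖A‖ := by
  rw [← frobenius_norm_conjTranspose, conjTranspose_mul,
    frobenius_norm_mul_unitary _ (U := Uᴴ) (Unitary.star_mem hU), frobenius_norm_conjTranspose]

theorem frobenius_norm_mul_sub_one_le {U V : Matrix n n 𝕜} (hV : V ∈ unitaryGroup n 𝕜) :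
    ‖U * V - 1‖ ≤ ‖U - 1‖ + ‖V - 1‖ := by
  calc ‖U * V - 1‖ = ‖(U - 1) * V + (V - 1)‖ := by noncomm_ring
    _ ≤ ‖(U - 1) * V‖ + ‖V - 1‖ := norm_add_le _ _
    _ = ‖U - 1‖ + ‖V - 1‖ := by rw [frobenius_norm_mul_unitary _ hV]

theorem frobenius_norm_mul_mul_conjTranspose_sub_one_le {W₁ W₂ W₃ W₄ : Matrix n n 𝕜}
    (hW₂ : W₂ ∈ unitaryGroup n 𝕜) (hW₃ : W₃ ∈ unitaryGroup n 𝕜) (hW₄ : W₄ ∈ unitaryGroup n 𝕜) :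
    ‖W₁ * W₂ * (W₄ * W₃)ᴴ - 1‖ ≤ ‖W₁ - 1‖ + ‖W₂ - 1‖ + ‖W₃ - 1‖ + ‖W₄ - 1‖ := by
  calc ‖W₁ * W₂ * (W₄ * W₃)ᴴ - 1‖ ≤ ‖W₁ * W₂ - 1‖ + ‖(W₄ * W₃)ᴴ - 1‖ :=
        frobenius_norm_mul_sub_one_le (Unitary.star_mem (mul_mem hW₄ hW₃))
    _ = ‖W₁ * W₂ - 1‖ + ‖W₄ * W₃ - 1‖ := by
        rw [← conjTranspose_one, ← conjTranspose_sub, frobenius_norm_conjTranspose,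
          conjTranspose_one]
    _ ≤ ‖W₁ - 1‖ + ‖W₂ - 1‖ + (‖W₄ - 1‖ + ‖W₃ - 1‖) :=
        add_le_add (frobenius_norm_mul_sub_one_le hW₂) (frobenius_norm_mul_sub_one_le hW₃)
    _ = ‖W₁ - 1‖ + ‖W₂ - 1‖ + ‖W₃ - 1‖ + ‖W₄ - 1‖ := by ring

theorem exp_I_smul_mem_unitaryGroup {X : Matrix n n ℂ} (hX : X.IsHermitian) :
    exp (Complex.I • X) ∈ unitaryGroup n ℂ :=
  exp_mem_unitary_of_mem_skewAdjoint (hX.isSelfAdjoint.smul_mem_skewAdjoint Complex.conj_I)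

theorem frobenius_norm_exp_I_smul_sub_one_le {X : Matrix n n ℂ} (hX : X.IsHermitian) :
    ‖exp (Complex.I • X) - 1‖ ≤ ‖X‖ := by
  set V := hX.eigenvectorUnitary
  set ev := hX.eigenvalues
  have hX' : X = V * diagonal (fun i ↦ (ev i : ℂ)) * star V := hX.spectral_theorem
  have hexp : exp (Complex.I • X) - 1 =
      V * diagonal (fun i ↦ Complex.exp (Complex.I * ev i) - 1) * star V := by
    have hconj : ∀ A : Matrix n n ℂ, exp ((V : Matrix n n ℂ) * A * (star V : unitaryGroup n ℂ)) =
        V * exp A * (star V : unitaryGroup n ℂ) :=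
      exp_units_conj (Unitary.toUnits V)
    rw [hX', ← smul_mul_assoc, ← mul_smul_comm, hconj, ← diagonal_smul, exp_diagonal,
      ← diagonal_one, ← diagonal_sub, mul_sub, sub_mul, diagonal_one, mul_one, Pi.exp_def,
      Complex.exp_eq_exp_ℂ, Unitary.coe_star, Unitary.mul_star_self_of_mem V.2]
    rfl
  rw [hexp, hX', frobenius_norm_mul_unitary _ (star V).2, frobenius_norm_unitary_mul _ V.2,
    frobenius_norm_mul_unitary _ (star V).2, frobenius_norm_unitary_mul _ V.2,
    frobenius_norm_diagonal, frobenius_norm_diagonal, EuclideanSpace.norm_eq,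
    EuclideanSpace.norm_eq]
  gcongr with i
  simpa using Real.norm_exp_I_mul_ofReal_sub_one_le (x := ev i)

theorem re_trace_conjTranspose_sub_one_mul_sub_one {U : Matrix n n 𝕜}
    (hU : U ∈ unitaryGroup n 𝕜) :
    RCLike.re ((U - 1)ᴴ * (U - 1)).trace = -2 * RCLike.re (U - 1).trace := by
  have hUU : Uᴴ * U = 1 := mem_unitaryGroup_iff'.1 hU
  have hexpand : (U - 1)ᴴ * (U - 1) = -((U - 1)ᴴ + (U - 1)) := by
    rw [conjTranspose_sub, conjTranspose_one]
    calc (Uᴴ - 1) * (U - 1) = Uᴴ * U - Uᴴ - U + 1 := by noncomm_ring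
      _ = _ := by rw [hUU]; abel
  rw [hexpand, trace_neg, trace_add, trace_conjTranspose, map_neg, map_add, RCLike.star_def,
    RCLike.conj_re]
  ring

theorem re_trace_conjTranspose_sub_one_mul_sub_one_eq_abs {U : Matrix n n 𝕜}
    (hU : U ∈ unitaryGroup n 𝕜) :
    RCLike.re ((U - 1)ᴴ * (U - 1)).trace = |2 * RCLike.re (U - 1).trace| := by
  have hnonneg : 0 ≤ RCLike.re ((U - 1)ᴴ * (U - 1)).trace := by
    rw [← frobenius_norm_sq_eq_re_trace]
    positivity
  rw [re_trace_conjTranspose_sub_one_mul_sub_one hU] at hnonneg ⊢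
  rw [abs_of_nonpos (by linarith)]
  ring

end Matrix

theorem wilson_action_quadratic_upper_bound_general (N : ℕ)
    (X₁ X₂ X₃ X₄ : Matrix (Fin N) (Fin N) ℂ)
    (h₁ : X₁.IsHermitian) (h₂ : X₂.IsHermitian) (h₃ : X₃.IsHermitian) (h₄ : X₄.IsHermitian)
    (Up : Matrix (Fin N) (Fin N) ℂ)
    (hUp : Up = exp (Complex.I • X₁) * exp (Complex.I • X₂) *
      (exp (Complex.I • X₄) * exp (Complex.I • X₃))ᴴ) :
    ((Up - 1)ᴴ * (Up - 1)).trace.re = |2 * ((Up - 1).trace.re)| ∧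
    ((Up - 1)ᴴ * (Up - 1)).trace.re ≤
      4 * N * ((X₁ᴴ * X₁).trace.re + (X₂ᴴ * X₂).trace.re
        + (X₃ᴴ * X₃).trace.re + (X₄ᴴ * X₄).trace.re) := by
  open scoped Matrix.Norms.Frobenius in
  · have hsq (A : Matrix (Fin N) (Fin N) ℂ) : (Aᴴ * A).trace.re = ‖A‖ ^ 2 :=
      (frobenius_norm_sq_eq_re_trace A).symm
    have hW₁ := exp_I_smul_mem_unitaryGroup h₁
    have hW₂ := exp_I_smul_mem_unitaryGroup h₂
    have hW₃ := exp_I_smul_mem_unitaryGroup h₃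
    have hW₄ := exp_I_smul_mem_unitaryGroup h₄
    have hU : Up ∈ unitaryGroup (Fin N) ℂ :=
      hUp ▸ mul_mem (mul_mem hW₁ hW₂) (Unitary.star_mem (mul_mem hW₄ hW₃))
    have htri : ‖Up - 1‖ ≤ ‖X₁‖ + ‖X₂‖ + ‖X₃‖ + ‖X₄‖ := by
      refine hUp ▸ (frobenius_norm_mul_mul_conjTranspose_sub_one_le hW₂ hW₃ hW₄).trans ?_
      gcongr <;> exact frobenius_norm_exp_I_smul_sub_one_le ‹_›
    refine ⟨re_trace_conjTranspose_sub_one_mul_sub_one_eq_abs hU, ?_⟩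
    rcases Nat.eq_zero_or_pos N with rfl | hN
    · simp [trace]
    have hN' : (4 : ℝ) ≤ 4 * N := by
      have : (1 : ℝ) ≤ N := Nat.one_le_cast.2 hN
      linarith
    rw [hsq, hsq, hsq, hsq, hsq]
    calc ‖Up - 1‖ ^ 2 ≤ (‖X₁‖ + ‖X₂‖ + ‖X₃‖ + ‖X₄‖) ^ 2 := by gcongr
      _ ≤ 4 * (‖X₁‖ ^ 2 + ‖X₂‖ ^ 2 + ‖X₃‖ ^ 2 + ‖X₄‖ ^ 2) := add_add_add_sq_le _ _ _ _
      _ ≤ 4 * N * (‖X₁‖ ^ 2 + ‖X₂‖ ^ 2 + ‖X₃‖ ^ 2 + ‖X₄‖ ^ 2) := by gcongr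

/-- Quadratic upper bound on the single-plaquette Wilson action: for Hermitian traceless
`X₁, X₂, X₃, X₄` and `U_p = exp(iX₁) exp(iX₂) (exp(iX₄) exp(iX₃))†`, one has
`‖U_p - 1‖²_{H-S} = |2 Re Tr (U_p - 1)| ≤ 4N ∑_{j=1}^4 Tr (X_j† X_j)`. -/
theorem wilson_action_quadratic_upper_bound (N : ℕ)
    (X₁ X₂ X₃ X₄ : Matrix (Fin N) (Fin N) ℂ)
    (h₁ : X₁.IsHermitian) (h₂ : X₂.IsHermitian) (h₃ : X₃.IsHermitian) (h₄ : X₄.IsHermitian)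
    (t₁ : X₁.trace = 0) (t₂ : X₂.trace = 0) (t₃ : X₃.trace = 0) (t₄ : X₄.trace = 0)
    (Up : Matrix (Fin N) (Fin N) ℂ)
    (hUp : Up = exp (Complex.I • X₁) * exp (Complex.I • X₂) *
      (exp (Complex.I • X₄) * exp (Complex.I • X₃))ᴴ) :
    ((Up - 1)ᴴ * (Up - 1)).trace.re = |2 * ((Up - 1).trace.re)| ∧
    ((Up - 1)ᴴ * (Up - 1)).trace.re ≤
      4 * N * ((X₁ᴴ * X₁).trace.re + (X₂ᴴ * X₂).trace.re
        + (X₃ᴴ * X₃).trace.re + (X₄ᴴ * X₄).trace.re) :=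
  wilson_action_quadratic_upper_bound_general N X₁ X₂ X₃ X₄ h₁ h₂ h₃ h₄ Up hUp
end

section
/- Let G be a compact topological group with Haar probability measure μ, V and E finite sets, s, t : E → V, and let w : G^E → ℝ be a nonnegative bounded measurable weight (e.g. w = exp(−β A) for a Wilson action A) with ∫ w dμ^E > 0, which is gauge invariant: w(Φ_h g) = w(g) for every h : V → G, where (Φ_h g)(b) = h(s b)·g(b)·(h(t b))⁻¹. Let b₀ ∈ E be a bond with s b₀ ≠ t b₀ and let F : G → ℂ be bounded measurable. Then the gauge-theory expectation of F(g(b₀)) factorizes through the free single-bond Haar average: ( ∫_{G^E} F(g(b₀)) · w(g) dμ^E(g) ) / ( ∫_{G^E} w dμ^E ) = ∫_G F dμ. -/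
open MeasureTheory Measure Set

/-!
The gauge transformation equal to `x` at the vertex `s b₀` and to `1` elsewhere preserves both
the weight `w` and the product Haar measure, and, because `s b₀ ≠ t b₀`, it multiplies `g b₀` on
the left by `x`. Hence the law of `g b₀` under the finite measure `w · μ^E` is a left-invariant
finite measure on the compact group `G`; by uniqueness of Haar measure it is its total mass
`∫ w dμ^E` times `μ`. Integrating `F` against it gives the numerator `(∫ w dμ^E) · ∫ F dμ`.
-/

section Haar

variable {G : Type*} [Group G] [TopologicalSpace G] [IsTopologicalGroup G] [CompactSpace G]
  [MeasurableSpace G] [BorelSpace G] (μ : Measure G) [μ.IsHaarMeasure] [IsProbabilityMeasure μ]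

theorem isMulRightInvariant_of_compactSpace : μ.IsMulRightInvariant := by
  refine ⟨fun g => ?_⟩
  have : IsProbabilityMeasure (μ.map (· * g)) :=
    isProbabilityMeasure_map (measurable_mul_const g).aemeasurable
  exact isHaarMeasure_eq_of_isProbabilityMeasure _ μ

theorem eq_measure_univ_smul_of_isMulLeftInvariant (ν : Measure G) [IsFiniteMeasure ν]
    [ν.IsMulLeftInvariant] : ν = ν univ • μ := by
  have hν := isMulInvariant_eq_smul_of_compactSpace ν μ
  conv_rhs => rw [hν]
  simpa using hν

theorem map_eq_measure_univ_smul_of_forall_exists_measurePreserving {α : Type*}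
    [MeasurableSpace α] (ρ : Measure α) [IsFiniteMeasure ρ] {π : α → G} (hπ : Measurable π)
    (hlift : ∀ x, ∃ T : α → α, MeasurePreserving T ρ ρ ∧ ∀ a, π (T a) = x * π a) :
    ρ.map π = ρ univ • μ := by
  have : (ρ.map π).IsMulLeftInvariant := by
    refine ⟨fun x => ?_⟩
    obtain ⟨T, hT, hπT⟩ := hlift x
    have hcomp : (x * ·) ∘ π = π ∘ T := funext fun a => (hπT a).symm
    rw [map_map (measurable_const_mul x) hπ, hcomp, ← map_map hπ hT.measurable, hT.map_eq]
  rw [eq_measure_univ_smul_of_isMulLeftInvariant μ (ρ.map π), map_apply hπ .univ, preimage_univ]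

end Haar

section WithDensity

variable {α : Type*} [MeasurableSpace α] {μ : Measure α}

theorem MeasureTheory.MeasurePreserving.withDensity_of_forall_comp_eq {T : α → α} {f : α → ENNReal}
    (hT : MeasurePreserving T μ μ) (hf : Measurable f) (hfT : ∀ a, f (T a) = f a) :
    MeasurePreserving T (μ.withDensity f) (μ.withDensity f) := by
  refine ⟨hT.measurable, ext fun S hS => ?_⟩
  rw [map_apply hT.measurable hS, withDensity_apply _ hS, withDensity_apply _ (hT.measurable hS),
    ← hT.setLIntegral_comp_preimage hS hf]
  simp only [hfT]

theorem integral_withDensity_ofReal_eq_integral_smul {E : Type*} [NormedAddCommGroup E]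
    [NormedSpace ℝ E] {f : α → ℝ} (hf : Measurable f) (hf0 : ∀ a, 0 ≤ f a) (g : α → E) :
    ∫ a, g a ∂μ.withDensity (fun a => ENNReal.ofReal (f a)) = ∫ a, f a • g a ∂μ := by
  refine (integral_withDensity_eq_integral_smul hf.real_toNNReal g).trans
    (integral_congr_ae (.of_forall fun a => ?_))
  simp only [NNReal.smul_def, Real.coe_toNNReal _ (hf0 a)]

end WithDensity

section Gauge

variable {V E G : Type*} [Group G]

def gaugeTransform (s t : E → V) (h : V → G) (g : E → G) : E → G :=
  fun b => h (s b) * g b * (h (t b))⁻¹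

theorem gaugeTransform_mulSingle_apply [DecidableEq V] {s t : E → V} {b : E} (hb : s b ≠ t b)
    (x : G) (g : E → G) : gaugeTransform s t (Pi.mulSingle (s b) x) g b = x * g b := by
  simp [gaugeTransform, Pi.mulSingle_eq_of_ne' hb]

theorem measurePreserving_gaugeTransform [Fintype E] [MeasurableSpace G] [MeasurableMul G]
    (μ : Measure G) [SigmaFinite μ] [μ.IsMulLeftInvariant] [μ.IsMulRightInvariant]
    (s t : E → V) (h : V → G) :
    MeasurePreserving (gaugeTransform s t h) (Measure.pi fun _ => μ) (Measure.pi fun _ => μ) := by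
  show MeasurePreserving (fun g => (h ∘ s) * g * (h ∘ t)⁻¹) _ _
  exact (measurePreserving_mul_right _ _).comp (measurePreserving_mul_left _ _)

end Gauge

theorem elitzur_single_bond_general
    {G : Type*} [Group G] [TopologicalSpace G] [IsTopologicalGroup G] [CompactSpace G]
    [MeasurableSpace G] [BorelSpace G]
    (μ : Measure G) [μ.IsHaarMeasure] [IsProbabilityMeasure μ]
    {V E : Type*} [Fintype E] (s t : E → V)
    (w : (E → G) → ℝ) (hw_meas : Measurable w) (hw_nonneg : ∀ g, 0 ≤ w g)
    (hw_pos : 0 < ∫ g, w g ∂(Measure.pi fun _ : E => μ))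
    (hw_gauge : ∀ (h : V → G) (g : E → G),
      w (fun b => h (s b) * g b * (h (t b))⁻¹) = w g)
    (b₀ : E) (hb₀ : s b₀ ≠ t b₀)
    (F : G → ℂ) (hF_meas : Measurable F) :
    (∫ g, F (g b₀) * ((w g : ℝ) : ℂ) ∂(Measure.pi fun _ : E => μ)) /
        (∫ g, ((w g : ℝ) : ℂ) ∂(Measure.pi fun _ : E => μ))
      = ∫ x, F x ∂μ := by
  classical
  have := isMulRightInvariant_of_compactSpace μ
  set μE := Measure.pi fun _ : E => μ
  set Z := ∫ g, w g ∂μE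
  set ρ := μE.withDensity fun g => ENNReal.ofReal (w g)
  have hw_int : Integrable w μE := .of_integral_ne_zero hw_pos.ne'
  have : IsFiniteMeasure ρ := isFiniteMeasure_withDensity_ofReal hw_int.2
  have hρ_univ : ρ univ = ENNReal.ofReal Z := by
    rw [withDensity_apply _ .univ, setLIntegral_univ,
      ofReal_integral_eq_lintegral_ofReal hw_int (.of_forall hw_nonneg)]
  have hmarginal : ρ.map (fun g => g b₀) = ENNReal.ofReal Z • μ := by
    rw [← hρ_univ]
    refine map_eq_measure_univ_smul_of_forall_exists_measurePreserving μ ρ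
      (measurable_pi_apply b₀) fun x => ⟨gaugeTransform s t (Pi.mulSingle (s b₀) x), ?_,
        gaugeTransform_mulSingle_apply hb₀ x⟩
    exact (measurePreserving_gaugeTransform μ s t _).withDensity_of_forall_comp_eq
      hw_meas.ennreal_ofReal fun g => congrArg ENNReal.ofReal (hw_gauge _ g)
  have hnum : ∫ g, F (g b₀) * ((w g : ℝ) : ℂ) ∂μE = Z • ∫ x, F x ∂μ :=
    calc ∫ g, F (g b₀) * ((w g : ℝ) : ℂ) ∂μE = ∫ g, F (g b₀) ∂ρ := by
          rw [integral_withDensity_ofReal_eq_integral_smul hw_meas hw_nonneg]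
          simp only [Complex.real_smul, mul_comm]
      _ = ∫ x, F x ∂(ρ.map fun g => g b₀) :=
          (integral_map (measurable_pi_apply b₀).aemeasurable hF_meas.aestronglyMeasurable).symm
      _ = Z • ∫ x, F x ∂μ := by
          rw [hmarginal, integral_smul_measure, ENNReal.toReal_ofReal hw_pos.le]
  rw [hnum, integral_complex_ofReal, Complex.real_smul, mul_div_cancel_left₀ _
    (Complex.ofReal_ne_zero.mpr hw_pos.ne')]

/-- Elitzur's theorem for a single bond: for a gauge-invariant, nonnegative, bounded weight `w`
with positive partition function, and a bond `b₀` with distinct endpoints, the normalized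
expectation of any bounded measurable function of the single bond variable `g(b₀)` equals its
free single-bond Haar average. -/
theorem elitzur_single_bond
    {G : Type*} [Group G] [TopologicalSpace G] [IsTopologicalGroup G] [CompactSpace G]
    [MeasurableSpace G] [BorelSpace G]
    (μ : Measure G) [μ.IsHaarMeasure] [IsProbabilityMeasure μ]
    {V E : Type*} [Fintype V] [Fintype E] (s t : E → V)
    (w : (E → G) → ℝ) (hw_meas : Measurable w) (hw_nonneg : ∀ g, 0 ≤ w g)
    (hw_bdd : ∃ C, ∀ g, w g ≤ C)
    (hw_pos : 0 < ∫ g, w g ∂(Measure.pi fun _ : E => μ))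
    (hw_gauge : ∀ (h : V → G) (g : E → G),
      w (fun b => h (s b) * g b * (h (t b))⁻¹) = w g)
    (b₀ : E) (hb₀ : s b₀ ≠ t b₀)
    (F : G → ℂ) (hF_meas : Measurable F) (hF_bdd : ∃ C, ∀ x, ‖F x‖ ≤ C) :
    (∫ g, F (g b₀) * ((w g : ℝ) : ℂ) ∂(Measure.pi fun _ : E => μ)) /
        (∫ g, ((w g : ℝ) : ℂ) ∂(Measure.pi fun _ : E => μ))
      = ∫ x, F x ∂μ :=
  elitzur_single_bond_general μ s t w hw_meas hw_nonneg hw_pos hw_gauge b₀ hb₀ F hF_meas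
end
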